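/- arXiv:math/0309429 — 7 statements merged into one kernel-verified Lean document; each statement's English description precedes it below -/
import Mathlib

section
/- Let R be a commutative ring and let I_1, ..., I_n be ideals of R satisfying I_i · I_i = I_i for every i. Then for every k with 1 ≤ k ≤ n, the product over all subsets S of {1,...,n} with |S| = k of the ideals ∑_{i∈S} I_i equals the sum over all subsets T of {1,...,n} with |T| = n-k+1 of the ideal products ∏_{j∈T} I_j; that is, ∏_{S⊆{1,...,n}, |S|=k} (∑_{i∈S} I_i) = ∑_{T⊆{1,...,n}, |T|=n-k+1} (∏_{j∈T} I_j). -/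
/-!
Expanding the left-hand side, `∏_S ∑_{i ∈ S} I i` is the sum over choice functions `p` (with
`p S ∈ S`) of `∏_S I (p S)`. The image of `p` meets every `k`-set, so it has at least `n - k + 1`
elements, and since `I ^ m ≤ I` for `m ≥ 1`, each such term lies below `∏_{j ∈ T} I j` for some
`(n - k + 1)`-set `T`. Conversely, an `(n - k + 1)`-set `T` meets every `k`-set `S`, so
`∏_{j ∈ T} I j ≤ ∑_{i ∈ S} I i` for all `S`; as that product is idempotent, it lies below the product
of all these sums.
-/

open Finset

theorem Fintype.card_lt_card_add_of_forall_inter_nonempty {α : Type*} [Fintype α]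
    [DecidableEq α] {A : Finset α} {k : ℕ} (h : ∀ S : Finset α, #S = k → (S ∩ A).Nonempty) :
    Fintype.card α < #A + k := by
  by_contra! hle
  obtain ⟨S, hSA, hS⟩ := exists_subset_card_eq (s := Aᶜ) (n := k) (by rw [card_compl]; omega)
  obtain ⟨x, hx⟩ := h S hS
  rw [mem_inter] at hx
  exact mem_compl.1 (hSA hx.1) hx.2

namespace Ideal

variable {R ι : Type*} [CommSemiring R]

theorem prod_comp_le_prod_image {κ : Type*} [DecidableEq κ] (s : Finset ι) (g : ι → κ)
    (f : κ → Ideal R) : ∏ x ∈ s, f (g x) ≤ ∏ j ∈ s.image g, f j := by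
  rw [prod_comp]
  refine prod_le_prod' fun j hj => pow_le_self ?_
  obtain ⟨i, hi, rfl⟩ := mem_image.1 hj
  exact card_ne_zero_of_mem (mem_filter.2 ⟨hi, rfl⟩)

theorem le_prod_of_isIdempotentElem {X : Ideal R} (hX : IsIdempotentElem X) (s : Finset ι)
    (f : ι → Ideal R) (h : ∀ i ∈ s, X ≤ f i) : X ≤ ∏ i ∈ s, f i := by
  rcases s.eq_empty_or_nonempty with rfl | hs
  · simp
  · rw [← hX.pow_eq hs.card_ne_zero]
    exact pow_card_le_prod s f X h

variable [Fintype ι] [DecidableEq ι] (I : ι → Ideal R) {k : ℕ}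

theorem prod_powersetCard_sum_le_sum_powersetCard_prod (hk : k ≤ Fintype.card ι) :
    ∏ S ∈ univ.powersetCard k, ∑ i ∈ S, I i
      ≤ ∑ T ∈ univ.powersetCard (Fintype.card ι - k + 1), ∏ j ∈ T, I j := by
  rw [prod_sum, sum_eq_sup, Finset.sup_le_iff]
  intro p hp
  set A := (univ.powersetCard k).attach.image fun S => p S.1 S.2
  have hA : Fintype.card ι - k + 1 ≤ #A := by
    have := Fintype.card_lt_card_add_of_forall_inter_nonempty (A := A) fun S hS =>
      ⟨_, mem_inter.2 ⟨Finset.mem_pi.1 hp S (mem_powersetCard_univ.2 hS),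
        mem_image_of_mem _ (mem_attach _ ⟨S, mem_powersetCard_univ.2 hS⟩)⟩⟩
    omega
  obtain ⟨T, hTA, hT⟩ := exists_subset_card_eq hA
  calc ∏ S ∈ (univ.powersetCard k).attach, I (p S.1 S.2)
      ≤ ∏ j ∈ A, I j := prod_comp_le_prod_image _ _ I
    _ ≤ ∏ j ∈ T, I j :=
        prod_le_prod_of_subset_of_le_one' hTA fun _ _ _ => one_eq_top (R := R) ▸ le_top
    _ ≤ _ := by
        rw [sum_eq_sup]
        exact le_sup (f := fun T => ∏ j ∈ T, I j) (mem_powersetCard_univ.2 hT)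

theorem sum_powersetCard_prod_le_prod_powersetCard_sum (hI : ∀ i, IsIdempotentElem (I i))
    (hk : k ≤ Fintype.card ι) :
    ∑ T ∈ univ.powersetCard (Fintype.card ι - k + 1), ∏ j ∈ T, I j
      ≤ ∏ S ∈ univ.powersetCard k, ∑ i ∈ S, I i := by
  rw [sum_eq_sup, Finset.sup_le_iff]
  intro T hT
  have hTidem : IsIdempotentElem (∏ j ∈ T, I j) :=
    prod_induction _ IsIdempotentElem (fun _ _ => IsIdempotentElem.mul) .one fun j _ => hI j
  refine le_prod_of_isIdempotentElem hTidem _ _ fun S hS => ?_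
  obtain ⟨i, hi⟩ : (S ∩ T).Nonempty := by
    refine inter_nonempty_of_card_lt_card_add_card (subset_univ S) (subset_univ T) ?_
    rw [mem_powersetCard_univ.1 hS, mem_powersetCard_univ.1 hT, card_univ]
    omega
  rw [mem_inter] at hi
  calc ∏ j ∈ T, I j ≤ I i := prod_le_inf.trans (inf_le hi.2)
    _ ≤ ∑ i ∈ S, I i := by
        rw [sum_eq_sup]
        exact le_sup hi.1

end Ideal

theorem prod_of_sums_eq_sum_of_prods_general
    {R : Type*} [CommRing R] (n : ℕ) (I : Fin n → Ideal R)
    (hidem : ∀ i, I i * I i = I i) (k : ℕ) (hkn : k ≤ n) :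
    ∏ S ∈ Finset.univ.powersetCard k, (∑ i ∈ S, I i)
      = ∑ T ∈ Finset.univ.powersetCard (n - k + 1), (∏ j ∈ T, I j) := by
  have hk : k ≤ Fintype.card (Fin n) := by rwa [Fintype.card_fin]
  have h := le_antisymm (Ideal.prod_powersetCard_sum_le_sum_powersetCard_prod I hk)
    (Ideal.sum_powersetCard_prod_le_prod_powersetCard_sum I hidem hk)
  rwa [Fintype.card_fin] at h

/-- Lemma 2.4(a) of the paper: for idempotent ideals `I₁, …, Iₙ` in a commutative ring,
`∏_{S ⊆ {1,…,n}, |S| = k} (∑_{i ∈ S} Iᵢ) = ∑_{T ⊆ {1,…,n}, |T| = n-k+1} (∏_{j ∈ T} Iⱼ)`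
for all `1 ≤ k ≤ n`. -/
theorem prod_of_sums_eq_sum_of_prods
    {R : Type*} [CommRing R] (n : ℕ) (I : Fin n → Ideal R)
    (hidem : ∀ i, I i * I i = I i) (k : ℕ) (hk1 : 1 ≤ k) (hkn : k ≤ n) :
    ∏ S ∈ Finset.univ.powersetCard k, (∑ i ∈ S, I i)
      = ∑ T ∈ Finset.univ.powersetCard (n - k + 1), (∏ j ∈ T, I j) :=
  prod_of_sums_eq_sum_of_prods_general n I hidem k hkn
end

section
/- Let A be a C*-algebra and let I_1, ..., I_n and K be closed two-sided ideals of A such that a·b ∈ K whenever a ∈ I_i, b ∈ I_j and i ≠ j. Then for any elements a_1, ..., a_n with a_i ∈ I_i, the sum a_1 + ... + a_n belongs to K if and only if a_i ∈ K for every i. -/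
/-!
If `K` is a closed ideal and `b = star x * x ∈ K`, then `x` is the limit as `t → 0` of
`x * b (t + b)⁻¹ ∈ K`: `‖x - x * b (t + b)⁻¹‖ ^ 2` is the supremum of
`t ^ 2 s / (t + s) ^ 2` over the spectrum of `b`, hence at most `t / 4`. Applied three times,
this shows that `a * star a * a ∈ K` already forces `a ∈ K`. Finally, multiplying `∑ j, a j`
on the left by `a i * star (a i) ∈ I i` sends every term with `j ≠ i` into `K`, leaving
`a i * star (a i) * a i`.
-/

theorem mem_of_sum_mem_of_forall_ne_mem {G S ι : Type*} [AddCommGroup G] [SetLike S G]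
    [AddSubgroupClass S G] [Fintype ι] {K : S} {a : ι → G} (hsum : ∑ j, a j ∈ K) (i : ι)
    (hne : ∀ j ≠ i, a j ∈ K) : a i ∈ K := by
  classical
  rw [← Finset.add_sum_erase _ _ (Finset.mem_univ i)] at hsum
  exact (add_mem_cancel_right (sum_mem fun j hj ↦ hne j (Finset.ne_of_mem_erase hj))).mp hsum

section

variable {A : Type*} [CStarAlgebra A]

theorem TwoSidedIdeal.cfc_div_add_mem (K : TwoSidedIdeal A) {x : A} (hx : star x * x ∈ K)
    {t : ℝ} (ht : 0 < t) : cfc (fun s : ℝ ↦ s / (t + s)) (star x * x) ∈ K := by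
  have hpos : ∀ s ∈ spectrum ℝ (star x * x), t + s ≠ 0 := fun s hs ↦
    (add_pos_of_pos_of_nonneg ht (spectrum_star_mul_self_nonneg s hs)).ne'
  simp only [div_eq_mul_inv]
  rw [cfc_mul (fun s ↦ s) (fun s ↦ (t + s)⁻¹) _ continuousOn_id
    (continuousOn_const.add continuousOn_id |>.inv₀ hpos), cfc_id' ℝ (star x * x)]
  exact K.mul_mem_right _ _ hx

theorem norm_sub_mul_cfc_div_add_sq_le (x : A) {t : ℝ} (ht : 0 < t) :
    ‖x - x * cfc (fun s : ℝ ↦ s / (t + s)) (star x * x)‖ ^ 2 ≤ t / 4 := by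
  set b := star x * x
  have hnonneg : ∀ s ∈ spectrum ℝ b, 0 ≤ s := spectrum_star_mul_self_nonneg
  have hf : ContinuousOn (fun s : ℝ ↦ s / (t + s)) (spectrum ℝ b) :=
    continuousOn_id.div (continuousOn_const.add continuousOn_id)
      fun s hs ↦ (add_pos_of_pos_of_nonneg ht (hnonneg s hs)).ne'
  have hg : ContinuousOn (fun s : ℝ ↦ 1 - s / (t + s)) (spectrum ℝ b) :=
    continuousOn_const.sub hf
  set e := cfc (fun s : ℝ ↦ s / (t + s)) b
  have hstar : star (x - x * e) * (x - x * e) =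
      cfc (fun s : ℝ ↦ (1 - s / (t + s)) * s * (1 - s / (t + s))) b := calc
    _ = (1 - e) * b * (1 - e) := by
      rw [← mul_one_sub, star_mul, star_sub, star_one,
        (cfc_predicate _ b : IsSelfAdjoint e).star_eq]
      simp only [b, mul_assoc]
      rfl
    _ = cfc (fun s : ℝ ↦ 1 - s / (t + s)) b * cfc (fun s : ℝ ↦ s) b *
        cfc (fun s : ℝ ↦ 1 - s / (t + s)) b := by
      rw [cfc_sub _ _ b continuousOn_const hf, cfc_const_one ℝ b, cfc_id' ℝ b]
    _ = _ := by
      rw [← cfc_mul (fun s : ℝ ↦ 1 - s / (t + s)) (fun s ↦ s) b hg continuousOn_id,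
        ← cfc_mul (fun s : ℝ ↦ (1 - s / (t + s)) * s) (fun s : ℝ ↦ 1 - s / (t + s)) b
          (hg.mul continuousOn_id) hg]
  rw [sq, ← CStarRing.norm_star_mul_self, hstar]
  refine norm_cfc_le (by positivity) fun s hs ↦ ?_
  have hs := hnonneg s hs
  have hts : 0 < t + s := by positivity
  have hfactor : 1 - s / (t + s) = t / (t + s) := by field_simp; ring
  have hgap :
      t / (t + s) * s * (t / (t + s)) = t / 4 - t * (t - s) ^ 2 / (4 * (t + s) ^ 2) := by
    field_simp
    ring
  rw [hfactor, Real.norm_eq_abs, abs_of_nonneg (by positivity), hgap]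
  linarith [show 0 ≤ t * (t - s) ^ 2 / (4 * (t + s) ^ 2) by positivity]

theorem TwoSidedIdeal.mem_of_star_mul_self_mem {K : TwoSidedIdeal A} (hK : IsClosed (K : Set A))
    {x : A} (hx : star x * x ∈ K) : x ∈ K := by
  refine hK.closure_subset (Metric.mem_closure_iff.mpr fun ε hε ↦ ?_)
  refine ⟨_, K.mul_mem_left x _ (K.cfc_div_add_mem hx (pow_pos hε 2)), ?_⟩
  have hsq := norm_sub_mul_cfc_div_add_sq_le x (pow_pos hε 2)
  rw [dist_eq_norm]
  exact lt_of_pow_lt_pow_left₀ 2 hε.le (by linarith [pow_pos hε 2])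

theorem TwoSidedIdeal.mem_of_mul_star_mul_mem {K : TwoSidedIdeal A} (hK : IsClosed (K : Set A))
    {x : A} (hx : x * star x * x ∈ K) : x ∈ K := by
  have hxx : x * star x ∈ K := K.mem_of_star_mul_self_mem hK <| by
    simpa only [star_mul, star_star, mul_assoc] using K.mul_mem_right _ (star x) hx
  refine K.mem_of_star_mul_self_mem hK (K.mem_of_star_mul_self_mem hK ?_)
  simpa only [star_mul, star_star, mul_assoc] using
    K.mul_mem_left (star x) _ (K.mul_mem_right _ x hxx)

end

theorem sum_mem_iff_forall_mem_of_pairwise_mul_mem_general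
    {A : Type*} [NormedRing A] [StarRing A] [CStarRing A] [NormedAlgebra ℂ A]
    [CompleteSpace A] [StarModule ℂ A]
    (n : ℕ) (I : Fin n → TwoSidedIdeal A) (K : TwoSidedIdeal A)
    (hKclosed : IsClosed (K : Set A))
    (hmul : ∀ i j, i ≠ j → ∀ a ∈ I i, ∀ b ∈ I j, a * b ∈ K)
    (a : Fin n → A) (ha : ∀ i, a i ∈ I i) :
    (∑ i, a i) ∈ K ↔ ∀ i, a i ∈ K := by
  let _ : CStarAlgebra A := {}
  refine ⟨fun hsum i ↦ K.mem_of_mul_star_mul_mem hKclosed ?_,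
    fun h ↦ sum_mem fun i _ ↦ h i⟩
  refine mem_of_sum_mem_of_forall_ne_mem (a := fun j ↦ a i * star (a i) * a j) ?_ i
    fun j hj ↦ ?_
  · simpa only [Finset.mul_sum] using K.mul_mem_left (a i * star (a i)) _ hsum
  · exact hmul i j hj.symm _ ((I i).mul_mem_right _ _ (ha i)) _ (ha j)

/-- Lemma 2.4(b) (injectivity part) of the paper: if `I₁, …, Iₙ, K` are closed two-sided
ideals of a C*-algebra `A` such that `IᵢIⱼ ⊆ K` for `i ≠ j`, then for `aᵢ ∈ Iᵢ` the sum
`a₁ + ⋯ + aₙ` lies in `K` if and only if every `aᵢ` lies in `K`. -/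
theorem sum_mem_iff_forall_mem_of_pairwise_mul_mem
    {A : Type*} [NormedRing A] [StarRing A] [CStarRing A] [NormedAlgebra ℂ A]
    [CompleteSpace A] [StarModule ℂ A]
    (n : ℕ) (I : Fin n → TwoSidedIdeal A) (K : TwoSidedIdeal A)
    (hIclosed : ∀ i, IsClosed (I i : Set A)) (hKclosed : IsClosed (K : Set A))
    (hmul : ∀ i j, i ≠ j → ∀ a ∈ I i, ∀ b ∈ I j, a * b ∈ K)
    (a : Fin n → A) (ha : ∀ i, a i ∈ I i) :
    (∑ i, a i) ∈ K ↔ ∀ i, a i ∈ K :=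
  sum_mem_iff_forall_mem_of_pairwise_mul_mem_general n I K hKclosed hmul a ha
end

section
/- Let p_1, ..., p_n be distinct primes and let q be a prime with q ∉ {p_1, ..., p_n}. Then there exist positive integers K_1, ..., K_n and d such that for every tuple (l_1, ..., l_n) of natural numbers, the order of the element (q mod p_1^{K_1+l_1}, ..., q mod p_n^{K_n+l_n}) in the product group ∏_{i=1}^n (ℤ/p_i^{K_i+l_i}ℤ)ˣ equals d · p_1^{l_1} ⋯ p_n^{l_n}. -/
/-!
Fix one prime `p`. If `N` is the order of `q` modulo `p²`, write `q ^ N = 1 + p ^ v * a` with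
`p ∤ a`, so `v ≥ 2`. Then `q ^ N` has order `p ^ l` modulo `p ^ (v + l)`, and since `N` divides
the order of `q` there, that order is `N * p ^ l`.

In the product the order is the lcm of the orders `cᵢ * pᵢ ^ lᵢ`. Raising every `Kᵢ` by a
common `M` that exceeds all `pᵢ`-adic valuations of all `cⱼ` makes the `pᵢ`-part of the lcm
come from the `i`-th factor alone, so the lcm becomes `d * ∏ pᵢ ^ lᵢ`.
-/

open Finset

theorem ZMod.orderOf_natCast_prime_pow_add {p q N v a : ℕ} (hp : p.Prime) (hv : 2 ≤ v)
    (hN : orderOf (q : ZMod (p ^ 2)) = N) (hqN : q ^ N = 1 + p ^ v * a) (ha : ¬p ∣ a) (l : ℕ) :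
    orderOf (q : ZMod (p ^ (v + l))) = N * p ^ l := by
  have hN0 : N ≠ 0 := by
    rintro rfl
    have ha0 : a = 0 := by simpa [hp.ne_zero] using hqN
    exact ha (ha0 ▸ dvd_zero p)
  have hdvd : N ∣ orderOf (q : ZMod (p ^ (v + l))) := by
    have hp2 : p ^ 2 ∣ p ^ (v + l) := pow_dvd_pow p (by omega)
    simpa [hN] using orderOf_map_dvd (ZMod.castHom hp2 (ZMod (p ^ 2))).toMonoidHom
      (q : ZMod (p ^ (v + l)))
  have hpowN : orderOf ((q : ZMod (p ^ (v + l))) ^ N) = p ^ l := by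
    have := ZMod.orderOf_one_add_mul_prime_pow hp v (by omega) (by nlinarith [hp.two_le]) a
      (by exact_mod_cast ha) l
    rw [add_comm l v] at this
    rw [← Nat.cast_pow, hqN]
    push_cast at this ⊢
    exact this
  rw [orderOf_pow_of_dvd hN0 hdvd] at hpowN
  rw [← hpowN, Nat.mul_div_cancel' hdvd]

theorem ZMod.exists_orderOf_natCast_prime_pow_add_eq {p q : ℕ} (hp : p.Prime) (hqp : q.Coprime p)
    (hq : q ≠ 1) :
    ∃ K, 0 < K ∧ ∃ d, 0 < d ∧ ∀ l, orderOf (q : ZMod (p ^ (K + l))) = d * p ^ l := by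
  have : Fact p.Prime := ⟨hp⟩
  set N := orderOf (q : ZMod (p ^ 2)) with hN
  have hN0 : 0 < N :=
    ((ZMod.isUnit_iff_coprime q (p ^ 2)).mpr (hqp.pow_right 2)).isOfFinOrder.orderOf_pos
  have hq0 : q ≠ 0 := by rintro rfl; exact hp.ne_one (Nat.coprime_zero_left _ |>.mp hqp)
  have hqN : 1 < q ^ N := Nat.one_lt_pow hN0.ne' (by omega)
  obtain ⟨v, a, ha, hva⟩ := Nat.exists_eq_pow_mul_and_not_dvd (n := q ^ N - 1) (by omega) p
    hp.ne_one
  have hv : 2 ≤ v := by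
    have hdvd : p ^ 2 ∣ p ^ v * a := by
      rw [← hva, ← ZMod.natCast_eq_zero_iff, Nat.cast_sub hqN.le]
      simp [hN, pow_orderOf_eq_one]
    have hcop : (p ^ 2).Coprime a := (hp.coprime_iff_not_dvd.mpr ha).pow_left 2
    exact (Nat.pow_dvd_pow_iff_le_right hp.one_lt).mp (hcop.dvd_of_dvd_mul_right hdvd)
  exact ⟨v, by omega, N, hN0, ZMod.orderOf_natCast_prime_pow_add hp hv hN.symm (by omega) ha⟩

theorem Finset.lcm_mul_prime_pow_of_factorization_le {ι : Type*} (s : Finset ι) {p c : ι → ℕ}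
    (hp : ∀ i ∈ s, (p i).Prime) (hinj : Set.InjOn p s) (hc : ∀ i ∈ s, c i ≠ 0)
    (hdom : ∀ i ∈ s, ∀ j ∈ s, (c j).factorization (p i) ≤ (c i).factorization (p i))
    (l : ι → ℕ) :
    s.lcm (fun i => c i * p i ^ l i) = s.lcm c * ∏ i ∈ s, p i ^ l i := by
  have hpow : ∀ i ∈ s, p i ^ l i ≠ 0 := fun i hi => pow_ne_zero _ (hp i hi).ne_zero
  have hterm : ∀ i ∈ s, c i * p i ^ l i ≠ 0 := fun i hi => mul_ne_zero (hc i hi) (hpow i hi)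
  have hlcm : s.lcm c ≠ 0 := by simpa [Finset.lcm_eq_zero_iff] using hc
  have hprod : ∏ i ∈ s, p i ^ l i ≠ 0 := prod_ne_zero_iff.mpr hpow
  refine Nat.eq_of_factorization_eq (by simpa [Finset.lcm_eq_zero_iff] using hterm)
    (mul_ne_zero hlcm hprod) fun r => ?_
  have hpow_fact : ∀ i ∈ s, (p i ^ l i).factorization r = if p i = r then l i else 0 :=
    fun i hi => by rw [(hp i hi).factorization_pow, Finsupp.single_apply]
  rw [Finset.factorization_lcm hterm, Nat.factorization_mul hlcm hprod, Finsupp.add_apply,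
    Finset.factorization_lcm hc, Nat.factorization_prod hpow, Finsupp.finsetSum_apply,
    sum_congr rfl hpow_fact, sup_congr rfl fun i hi => by
      rw [Nat.factorization_mul (hc i hi) (hpow i hi), Finsupp.add_apply, hpow_fact i hi]]
  by_cases hr : ∃ j ∈ s, p j = r
  · obtain ⟨j, hj, rfl⟩ := hr
    have hsum : ∑ i ∈ s, (if p i = p j then l i else 0) = l j :=
      (sum_eq_single_of_mem j hj fun i hi hij => if_neg fun h => hij (hinj hi hj h)).trans
        (if_pos rfl)
    have hsup : s.sup (fun i => (c i).factorization (p j)) = (c j).factorization (p j) :=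
      le_antisymm (Finset.sup_le fun i hi => hdom j hj i hi)
        (le_sup (f := fun i => (c i).factorization (p j)) hj)
    rw [hsum, hsup]
    refine le_antisymm (Finset.sup_le fun i hi => ?_) (le_sup_of_le hj (by simp))
    by_cases hij : i = j
    · simp [hij]
    · rw [if_neg fun h => hij (hinj hi hj h), add_zero]
      exact (hdom j hj i hi).trans (Nat.le_add_right _ _)
  · push Not at hr
    rw [sum_eq_zero fun i hi => if_neg (hr i hi), add_zero]
    exact sup_congr rfl fun i hi => by rw [if_neg (hr i hi), add_zero]

theorem Finset.exists_lcm_mul_prime_pow_add_eq {ι : Type*} (s : Finset ι) {p c : ι → ℕ}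
    (hp : ∀ i ∈ s, (p i).Prime) (hinj : Set.InjOn p s) (hc : ∀ i ∈ s, c i ≠ 0) :
    ∃ M, ∀ l : ι → ℕ, s.lcm (fun i => c i * p i ^ (M + l i)) =
      s.lcm (fun i => c i * p i ^ M) * ∏ i ∈ s, p i ^ l i := by
  set M := s.sup fun i => s.sup fun j => (c j).factorization (p i)
  refine ⟨M, fun l => ?_⟩
  simp_rw [pow_add, ← mul_assoc]
  refine s.lcm_mul_prime_pow_of_factorization_le hp hinj
    (fun i hi => mul_ne_zero (hc i hi) (pow_ne_zero _ (hp i hi).ne_zero)) (fun i hi j hj => ?_) l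
  rcases eq_or_ne j i with rfl | hji
  · exact le_rfl
  have hM : (c j).factorization (p i) ≤ M :=
    le_sup_of_le hi (le_sup (f := fun j => (c j).factorization (p i)) hj)
  rw [Nat.factorization_mul (hc j hj) (pow_ne_zero _ (hp j hj).ne_zero),
    Nat.factorization_mul (hc i hi) (pow_ne_zero _ (hp i hi).ne_zero), Finsupp.add_apply,
    Finsupp.add_apply, (hp j hj).factorization_pow, (hp i hi).factorization_pow,
    Finsupp.single_apply, Finsupp.single_eq_same, if_neg fun h => hji (hinj hj hi h)]
  omega

/-- Proposition A.5: for distinct primes `p₁, …, pₙ` and a prime `q ∉ {p₁, …, pₙ}`, there are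
positive integers `K₁, …, Kₙ` and `d` such that for all natural numbers `l₁, …, lₙ`, the order
of `(q, …, q)` in `∏ᵢ (ℤ/pᵢ^(Kᵢ+lᵢ)ℤ)ˣ` equals `d · p₁^{l₁} ⋯ pₙ^{lₙ}`. -/
theorem exists_order_formula_product
    (n : ℕ) (p : Fin n → ℕ) (hp : ∀ i, (p i).Prime)
    (hdist : Function.Injective p)
    (q : ℕ) (hq : q.Prime) (hqp : ∀ i, q ≠ p i) :
    ∃ K : Fin n → ℕ, (∀ i, 0 < K i) ∧ ∃ d : ℕ, 0 < d ∧
      ∀ l : Fin n → ℕ,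
        orderOf (fun i => (ZMod.unitOfCoprime q
            (Nat.Coprime.pow_right (K i + l i)
              ((Nat.coprime_primes hq (hp i)).mpr (hqp i))) : (ZMod (p i ^ (K i + l i)))ˣ))
          = d * ∏ i, p i ^ l i := by
  choose K₀ hK₀ c hc hord using fun i =>
    ZMod.exists_orderOf_natCast_prime_pow_add_eq (hp i) ((Nat.coprime_primes hq (hp i)).mpr (hqp i))
      hq.one_lt.ne'
  obtain ⟨M, hM⟩ := univ.exists_lcm_mul_prime_pow_add_eq (fun i _ => hp i) hdist.injOn
    (fun i _ => (hc i).ne')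
  refine ⟨fun i => K₀ i + M, fun i => Nat.add_pos_left (hK₀ i) M,
    univ.lcm fun i => c i * p i ^ M, ?_, fun l => ?_⟩
  · exact Nat.pos_of_ne_zero <| by
      simp [Finset.lcm_eq_zero_iff, (hc _).ne', (hp _).ne_zero]
  · rw [Pi.orderOf, ← hM l]
    refine Finset.lcm_congr rfl fun i _ => ?_
    rw [← orderOf_units, ZMod.coe_unitOfCoprime, add_assoc]
    exact hord i (M + l i)
end

section
/- Let p_1, ..., p_n be distinct primes, let q be a prime with q ∉ {p_1, ..., p_n}, and suppose K_1, ..., K_n and d are positive integers such that for every tuple (l_1, ..., l_n) of natural numbers, the order of (q mod p_1^{K_1+l_1}, ..., q mod p_n^{K_n+l_n}) in ∏_{i=1}^n (ℤ/p_i^{K_i+l_i}ℤ)ˣ equals d · p_1^{l_1} ⋯ p_n^{l_n}. Let u be the unit of the product ring ∏_{i=1}^n ℤ_{p_i} whose underlying element is (q, ..., q), and let H be the topological closure in the topological group (∏_{i=1}^n ℤ_{p_i})ˣ of the subgroup generated by u. Then H has finite index in (∏_{i=1}^n ℤ_{p_i})ˣ and d · [(∏_{i=1}^n ℤ_{p_i})ˣ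 : H] = ∏_{i=1}^n (p_i - 1) p_i^{K_i - 1}. -/
open PadicInt

private lemma tz_eq_iff {p : ℕ} [hp : Fact p.Prime] (m : ℕ) (x y : ℤ_[p]) :
    PadicInt.toZModPow m x = PadicInt.toZModPow m y ↔ ‖x - y‖ ≤ (p : ℝ) ^ (-(m : ℤ)) := by
  rw [PadicInt.norm_le_pow_iff_mem_span_pow, ← PadicInt.ker_toZModPow, RingHom.mem_ker,
    map_sub, sub_eq_zero]

private lemma isOpen_tz_fiber {p : ℕ} [hp : Fact p.Prime] (m : ℕ) (c : ZMod (p ^ m)) :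
    IsOpen {x : ℤ_[p] | PadicInt.toZModPow m x = c} := by
  rcases Set.eq_empty_or_nonempty {x : ℤ_[p] | PadicInt.toZModPow m x = c} with h | ⟨x₀, hx₀⟩
  · rw [h]; exact isOpen_empty
  · have hx₀' : PadicInt.toZModPow m x₀ = c := hx₀
    have hset : {x : ℤ_[p] | PadicInt.toZModPow m x = c}
        = Metric.closedBall x₀ ((p : ℝ) ^ (-(m : ℤ))) := by
      ext y
      simp only [Set.mem_setOf_eq, Metric.mem_closedBall, dist_eq_norm]
      rw [← hx₀', tz_eq_iff]
    rw [hset]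
    have hppos : (0 : ℝ) < (p : ℝ) ^ (-(m : ℤ)) :=
      zpow_pos (by exact_mod_cast hp.out.pos) _
    exact IsUltrametricDist.isOpen_closedBall _ (ne_of_gt hppos)

private lemma toZModPow_surj {p : ℕ} [hp : Fact p.Prime] (m : ℕ) :
    Function.Surjective (PadicInt.toZModPow (p := p) m) := by
  intro c
  haveI : NeZero (p ^ m) := ⟨pow_ne_zero _ hp.out.ne_zero⟩
  exact ⟨((c.val : ℕ) : ℤ_[p]), by rw [map_natCast, ZMod.natCast_zmod_val]⟩

private lemma units_map_toZModPow_surj {p : ℕ} [hp : Fact p.Prime] {m : ℕ} (hm : 0 < m) :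
    Function.Surjective
      (Units.map (PadicInt.toZModPow (p := p) m).toMonoidHom) := by
  intro v
  obtain ⟨x, hx⟩ := toZModPow_surj (p := p) m (v : ZMod (p ^ m))
  have hxu : IsUnit x := by
    rw [PadicInt.isUnit_iff]
    by_contra h
    have h1 : ‖x‖ < 1 := lt_of_le_of_ne (PadicInt.norm_le_one x) h
    rw [PadicInt.norm_lt_one_iff_dvd] at h1
    have h0 : PadicInt.toZModPow (p := p) 1 x = 0 := by
      rw [← RingHom.mem_ker, PadicInt.ker_toZModPow, pow_one, Ideal.mem_span_singleton]
      exact h1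
    have h2 : (ZMod.castHom (pow_dvd_pow p hm) (ZMod (p ^ 1)))
        (PadicInt.toZModPow m x) = PadicInt.toZModPow 1 x := by
      rw [← PadicInt.zmod_cast_comp_toZModPow 1 m hm]; rfl
    haveI : Fact (1 < p ^ 1) := ⟨by simpa using hp.out.one_lt⟩
    have h3 : IsUnit ((ZMod.castHom (pow_dvd_pow p hm) (ZMod (p ^ 1)))
        ((v : ZMod (p ^ m)))) := v.isUnit.map _
    rw [hx] at h2
    rw [h2, h0] at h3
    exact h3.ne_zero rfl
  refine ⟨hxu.unit, Units.ext ?_⟩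
  simpa [IsUnit.unit_spec] using hx

private lemma exists_level {n : ℕ} {p : Fin n → ℕ} [inst : ∀ i, Fact (p i).Prime]
    (A : Set (∀ i, PadicInt (p i))) (hA : IsOpen A) (a : ∀ i, PadicInt (p i)) (ha : a ∈ A) :
    ∃ m : ℕ, ∀ y : ∀ i, PadicInt (p i),
      (∀ i, PadicInt.toZModPow m (y i) = PadicInt.toZModPow m (a i)) → y ∈ A := by
  obtain ⟨I, U, hU, hsub⟩ := isOpen_pi_iff.mp hA a ha
  have key : ∀ i : Fin n, ∃ m : ℕ, ∀ y : PadicInt (p i),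
      PadicInt.toZModPow m y = PadicInt.toZModPow m (a i) → i ∈ I → y ∈ U i := by
    intro i
    by_cases hi : i ∈ I
    · obtain ⟨ε, hε, hball⟩ := Metric.isOpen_iff.mp (hU i hi).1 (a i) (hU i hi).2
      have hplt : ((p i : ℝ))⁻¹ < 1 := by
        rw [inv_lt_one_iff₀]
        right
        exact_mod_cast (inst i).out.one_lt
      obtain ⟨m, hm⟩ : ∃ m : ℕ, ((p i : ℝ))⁻¹ ^ m < ε := exists_pow_lt_of_lt_one hε hplt
      refine ⟨m, fun y hy _ => hball ?_⟩
      rw [Metric.mem_ball, dist_eq_norm]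
      calc ‖y - a i‖ ≤ (p i : ℝ) ^ (-(m : ℤ)) := (tz_eq_iff m y (a i)).mp hy
        _ = ((p i : ℝ))⁻¹ ^ m := by rw [zpow_neg, zpow_natCast, inv_pow]
        _ < ε := hm
    · exact ⟨0, fun y _ hi' => absurd hi' hi⟩
  choose ms hms using key
  refine ⟨Finset.univ.sup ms, fun y hy => hsub fun i hi => ?_⟩
  refine hms i (y i) ?_ hi
  have h1 := PadicInt.cast_toZModPow (ms i) (Finset.univ.sup ms)
    (Finset.le_sup (Finset.mem_univ i)) (y i)
  have h2 := PadicInt.cast_toZModPow (ms i) (Finset.univ.sup ms)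
    (Finset.le_sup (Finset.mem_univ i)) (a i)
  rw [← h1, ← h2, hy i]

/-- Corollary A.6: with `K₁, …, Kₙ` and `d` as in Proposition A.5, the closure `H` of the
subgroup generated by the unit `(q, …, q)` in `(∏ᵢ ℤ_{pᵢ})ˣ` has finite index, and
`d · [(∏ᵢ ℤ_{pᵢ})ˣ : H] = ∏ᵢ (pᵢ - 1) pᵢ^(Kᵢ - 1)`. -/
theorem index_closure_zpowers_eq
    (n : ℕ) (p : Fin n → ℕ) (hp : ∀ i, Fact (p i).Prime)
    (hdist : Function.Injective p)
    (q : ℕ) (hq : q.Prime) (hqp : ∀ i, q ≠ p i)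
    (K : Fin n → ℕ) (hK : ∀ i, 0 < K i) (d : ℕ) (hd : 0 < d)
    (horder : ∀ l : Fin n → ℕ,
      orderOf (fun i => (ZMod.unitOfCoprime q
          (Nat.Coprime.pow_right (K i + l i)
            ((Nat.coprime_primes hq (hp i).out).mpr (hqp i))) : (ZMod (p i ^ (K i + l i)))ˣ))
        = d * ∏ i, p i ^ l i)
    (u : (∀ i, PadicInt (p i))ˣ)
    (hu : (u : ∀ i, PadicInt (p i)) = fun i => (q : PadicInt (p i))) :
    ((Subgroup.zpowers u).topologicalClosure).index ≠ 0 ∧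
      d * ((Subgroup.zpowers u).topologicalClosure).index
        = ∏ i, (p i - 1) * p i ^ (K i - 1) := by
  classical
  haveI := hp
  set R := ∀ i, PadicInt (p i) with hR
  -- the reduction homomorphisms
  let φ : ∀ l : Fin n → ℕ, Rˣ →* ∀ i, (ZMod (p i ^ (K i + l i)))ˣ := fun l =>
    Pi.monoidHom (fun i =>
      (Units.map (PadicInt.toZModPow (K i + l i)).toMonoidHom).comp
        (Units.map (Pi.evalRingHom (fun i => PadicInt (p i)) i).toMonoidHom))
  let g : ∀ l : Fin n → ℕ, ∀ i, (ZMod (p i ^ (K i + l i)))ˣ := fun l i =>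
    (ZMod.unitOfCoprime q
      (Nat.Coprime.pow_right (K i + l i)
        ((Nat.coprime_primes hq (hp i).out).mpr (hqp i))) : (ZMod (p i ^ (K i + l i)))ˣ)
  have hφval : ∀ (l : Fin n → ℕ) (x : Rˣ) (i : Fin n),
      ((φ l x i : (ZMod (p i ^ (K i + l i)))ˣ) : ZMod (p i ^ (K i + l i)))
        = PadicInt.toZModPow (K i + l i) ((x : R) i) := fun l x i => rfl
  have hφu : ∀ l, φ l u = g l := by
    intro l
    funext i
    apply Units.ext
    rw [hφval l u i, hu]
    exact map_natCast _ q
  have hφsurj : ∀ l, Function.Surjective (φ l) := by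
    intro l t
    have hex : ∀ i, ∃ w : (PadicInt (p i))ˣ,
        Units.map (PadicInt.toZModPow (K i + l i)).toMonoidHom w = t i :=
      fun i => units_map_toZModPow_surj (Nat.lt_of_lt_of_le (hK i) (Nat.le_add_right _ _)) (t i)
    choose w hw using hex
    refine ⟨⟨fun i => (w i : PadicInt (p i)), fun i => ((w i)⁻¹ : (PadicInt (p i))ˣ), ?_, ?_⟩, ?_⟩
    · funext i; exact (w i).mul_inv
    · funext i; exact (w i).inv_mul
    · funext i
      apply Units.ext
      rw [hφval]
      rw [← hw i]
      rfl
  set M := ∏ i, (p i - 1) * p i ^ (K i - 1) with hM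
  have hMpos : 0 < M := by
    refine Finset.prod_pos fun i _ => Nat.mul_pos ?_ (pow_pos (hp i).out.pos _)
    have := (hp i).out.two_le; omega
  have hcard : ∀ l : Fin n → ℕ, Nat.card (∀ i, (ZMod (p i ^ (K i + l i)))ˣ) = M * ∏ i, p i ^ l i := by
    intro l
    rw [Nat.card_pi]
    have hcc : ∀ i, Nat.card (ZMod (p i ^ (K i + l i)))ˣ
        = ((p i - 1) * p i ^ (K i - 1)) * p i ^ l i := by
      intro i
      haveI : NeZero (p i ^ (K i + l i)) := ⟨pow_ne_zero _ (hp i).out.ne_zero⟩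
      rw [Nat.card_eq_fintype_card, ZMod.card_units_eq_totient,
        Nat.totient_prime_pow (hp i).out (by have := hK i; omega)]
      have h1 : K i + l i - 1 = (K i - 1) + l i := by have := hK i; omega
      rw [h1, pow_add]; ring
    rw [Finset.prod_congr rfl (fun i _ => hcc i), hM, ← Finset.prod_mul_distrib]
  -- the finite-level subgroups
  let H : ∀ _l : Fin n → ℕ, Subgroup Rˣ := fun l => (Subgroup.zpowers (g l)).comap (φ l)
  have hidx : ∀ l, d * (H l).index = M := by
    intro l
    have h1 := Subgroup.card_mul_index (Subgroup.zpowers (g l))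
    rw [Nat.card_zpowers, horder l, hcard l] at h1
    have hP : 0 < ∏ i, p i ^ l i := Finset.prod_pos fun i _ => pow_pos (hp i).out.pos _
    have h2 : (H l).index = (Subgroup.zpowers (g l)).index :=
      Subgroup.index_comap_of_surjective _ (hφsurj l)
    rw [h2]
    refine Nat.eq_of_mul_eq_mul_right hP ?_
    rw [← h1]; ring
  set l₀ : Fin n → ℕ := (fun _ => 0) with hl₀
  have hidx0_ne : (H l₀).index ≠ 0 := by
    intro h
    have h' := hidx l₀
    rw [h, mul_zero] at h'
    omega
  -- compatibility: membership at level l implies membership at level l₀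
  have hcompat : ∀ (l : Fin n → ℕ) (x : Rˣ), x ∈ H l → x ∈ H l₀ := by
    intro l x hx
    have hle' : ∀ i, K i + l₀ i ≤ K i + l i := fun i => by simp [hl₀]
    let π : (∀ i, (ZMod (p i ^ (K i + l i)))ˣ) →* ∀ i, (ZMod (p i ^ (K i + l₀ i)))ˣ :=
      Pi.monoidHom fun i =>
        (ZMod.unitsMap (pow_dvd_pow (p i) (hle' i))).comp (Pi.evalMonoidHom _ i)
    have hπφ : ∀ y : Rˣ, π (φ l y) = φ l₀ y := by
      intro y
      funext i
      apply Units.ext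
      show (ZMod.castHom (pow_dvd_pow (p i) (hle' i)) (ZMod (p i ^ (K i + l₀ i))))
          (PadicInt.toZModPow (K i + l i) ((y : R) i))
        = PadicInt.toZModPow (K i + l₀ i) ((y : R) i)
      rw [← PadicInt.zmod_cast_comp_toZModPow (K i + l₀ i) (K i + l i) (hle' i)]
      rfl
    have hπg : π (g l) = g l₀ := by
      funext i
      apply Units.ext
      show (ZMod.castHom (pow_dvd_pow (p i) (hle' i)) (ZMod (p i ^ (K i + l₀ i))))
          ((q : ZMod (p i ^ (K i + l i)))) = (q : ZMod (p i ^ (K i + l₀ i)))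
      exact map_natCast _ q
    obtain ⟨k, hk⟩ := Subgroup.mem_zpowers_iff.mp (Subgroup.mem_comap.mp hx)
    refine Subgroup.mem_comap.mpr (Subgroup.mem_zpowers_iff.mpr ⟨k, ?_⟩)
    rw [← hπg, ← map_zpow, hk, hπφ]
  have hHle : ∀ l, H l₀ ≤ H l := by
    intro l
    have h1 : H l ≤ H l₀ := fun x hx => hcompat l x hx
    have h2 : (H l).index = (H l₀).index :=
      Nat.eq_of_mul_eq_mul_left hd ((hidx l).trans (hidx l₀).symm)
    have h3 := Subgroup.relIndex_mul_index h1
    rw [h2] at h3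
    have h4 : (H l).relIndex (H l₀) = 1 :=
      Nat.eq_of_mul_eq_mul_right (Nat.pos_of_ne_zero hidx0_ne) (by rw [h3, one_mul])
    exact Subgroup.relIndex_eq_one.mp h4
  have hopen : IsOpen ((H l₀ : Subgroup Rˣ) : Set Rˣ) := by
    have hset : ((H l₀ : Subgroup Rˣ) : Set Rˣ) = ⋃ k : ℤ, ⋂ i : Fin n,
        {x : Rˣ | PadicInt.toZModPow (K i + l₀ i) ((x : R) i)
          = (((g l₀ i) ^ k : (ZMod (p i ^ (K i + l₀ i)))ˣ) : ZMod (p i ^ (K i + l₀ i)))} := by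
      ext x
      simp only [SetLike.mem_coe, Subgroup.mem_comap, Subgroup.mem_zpowers_iff,
        Set.mem_iUnion, Set.mem_iInter, Set.mem_setOf_eq]
      constructor
      · rintro ⟨k, hk⟩
        refine ⟨k, fun i => ?_⟩
        rw [← hφval l₀ x i, ← hk]
        rfl
      · rintro ⟨k, hk⟩
        refine ⟨k, funext fun i => Units.ext ?_⟩
        rw [hφval l₀ x i]
        exact (hk i).symm
    rw [hset]
    refine isOpen_iUnion fun k => isOpen_iInter_of_finite fun i => ?_
    have hcont : Continuous (fun x : Rˣ => (x : R) i) :=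
      (continuous_apply i).comp Units.continuous_val
    exact IsOpen.preimage hcont (isOpen_tz_fiber (K i + l₀ i)
      (((g l₀ i) ^ k : (ZMod (p i ^ (K i + l₀ i)))ˣ) : ZMod (p i ^ (K i + l₀ i))))
  have hclosure : (Subgroup.zpowers u).topologicalClosure = H l₀ := by
    apply le_antisymm
    · refine Subgroup.topologicalClosure_minimal _ ?_ (Subgroup.isClosed_of_isOpen _ hopen)
      rw [Subgroup.zpowers_le]
      exact Subgroup.mem_comap.mpr (by rw [hφu l₀]; exact Subgroup.mem_zpowers _)
    · intro x hx
      have hxcl : x ∈ closure ((Subgroup.zpowers u : Subgroup Rˣ) : Set Rˣ) := by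
        rw [mem_closure_iff]
        intro O hO hxO
        obtain ⟨W, hWopen, hWpre⟩ := Units.isInducing_embedProduct.isOpen_iff.mp hO
        have hxW : ((x : R), MulOpposite.op ((x⁻¹ : Rˣ) : R)) ∈ W := by
          rw [← hWpre] at hxO; exact hxO
        obtain ⟨A, B, hAopen, hBopen, hxA, hxB, hABW⟩ := isOpen_prod_iff.mp hWopen _ _ hxW
        set B' : Set R := MulOpposite.op ⁻¹' B with hB'
        have hB'open : IsOpen B' := hBopen.preimage MulOpposite.continuous_op
        have hxB' : ((x⁻¹ : Rˣ) : R) ∈ B' := hxB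
        obtain ⟨m₁, hm₁⟩ := exists_level A hAopen ((x : Rˣ) : R) hxA
        obtain ⟨m₂, hm₂⟩ := exists_level B' hB'open ((x⁻¹ : Rˣ) : R) hxB'
        set m := max m₁ m₂ with hm
        set l : Fin n → ℕ := fun _ => m with hl
        have hxl : x ∈ H l := hHle l hx
        obtain ⟨k, hk⟩ := Subgroup.mem_zpowers_iff.mp (Subgroup.mem_comap.mp hxl)
        rw [← hφu l, ← map_zpow] at hk
        have hcong : ∀ (m' : ℕ), m' ≤ m → ∀ (y z : Rˣ), φ l y = φ l z →
            ∀ i, PadicInt.toZModPow m' ((y : R) i) = PadicInt.toZModPow m' ((z : R) i) := by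
          intro m' hm' y z hyz i
          have h1 : PadicInt.toZModPow (K i + l i) ((y : R) i)
              = PadicInt.toZModPow (K i + l i) ((z : R) i) := by
            rw [← hφval l y i, ← hφval l z i, hyz]
          have hle2 : m' ≤ K i + l i := le_trans hm' (Nat.le_add_left m (K i))
          rw [← PadicInt.cast_toZModPow m' (K i + l i) hle2 ((y : R) i),
            ← PadicInt.cast_toZModPow m' (K i + l i) hle2 ((z : R) i), h1]
        refine ⟨u ^ k, ?_, ?_⟩
        · rw [← hWpre]
          refine hABW ⟨?_, ?_⟩
          · exact hm₁ _ (hcong m₁ (le_max_left _ _) (u ^ k) x hk)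
          · show MulOpposite.op (((u ^ k)⁻¹ : Rˣ) : R) ∈ B
            exact hm₂ _ (hcong m₂ (le_max_right _ _) (u ^ k)⁻¹ x⁻¹ (by rw [map_inv, map_inv, hk]))
        · exact ⟨k, rfl⟩
      exact hxcl
  rw [hclosure]
  exact ⟨hidx0_ne, hidx l₀⟩
end

section
/- Let p be an odd prime and let q and r be primes distinct from p. Suppose L_q and L_r are positive integers such that o_{p^l}(q) = o_p(q) for 1 ≤ l ≤ L_q and o_{p^l}(q) = p^{l-L_q} o_p(q) for l > L_q, and similarly o_{p^l}(r) = o_p(r) for 1 ≤ l ≤ L_r and o_{p^l}(r) = p^{l-L_r} o_p(r) for l > L_r. Let H be the topological closure in ℤ_pˣ of the subgroup generated by the units q and r. Then H has finite index in ℤ_pˣ and lcm(o_p(q), o_p(r)) · [ℤ_pˣ : H] = (p-1) · p^{min(L_q, L_r) - 1}. -/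
lemma pow_lcm_eq_one_of_mem_closure_pair {G : Type*} [CommGroup G] (a b : G) {s : G}
    (hs : s ∈ Subgroup.closure ({a, b} : Set G)) :
    s ^ Nat.lcm (orderOf a) (orderOf b) = 1 := by
  have hpair : Subgroup.closure ({a, b} : Set G)
      = Subgroup.zpowers a ⊔ Subgroup.zpowers b := by
    rw [Subgroup.zpowers_eq_closure, Subgroup.zpowers_eq_closure, ← Subgroup.closure_union,
      Set.singleton_union]
  rw [hpair] at hs
  rcases Subgroup.mem_sup.mp hs with ⟨y, hy, z, hz, rfl⟩
  have hdy : orderOf y ∣ Nat.lcm (orderOf a) (orderOf b) := by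
    refine dvd_trans ?_ (Nat.dvd_lcm_left _ _)
    have := Subgroup.orderOf_dvd_natCard _ hy
    rwa [Nat.card_zpowers] at this
  have hdz : orderOf z ∣ Nat.lcm (orderOf a) (orderOf b) := by
    refine dvd_trans ?_ (Nat.dvd_lcm_right _ _)
    have := Subgroup.orderOf_dvd_natCard _ hz
    rwa [Nat.card_zpowers] at this
  rw [mul_pow, orderOf_dvd_iff_pow_eq_one.mp hdy, orderOf_dvd_iff_pow_eq_one.mp hdz, one_mul]

lemma card_closure_pair {G : Type*} [CommGroup G] [Finite G] (a b : G)
    [hc : IsCyclic (Subgroup.closure ({a, b} : Set G))] :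
    Nat.card (Subgroup.closure ({a, b} : Set G)) = Nat.lcm (orderOf a) (orderOf b) := by
  set T := Subgroup.closure ({a, b} : Set G) with hT
  refine Nat.dvd_antisymm ?_ (Nat.lcm_dvd ?_ ?_)
  · obtain ⟨c, hgen⟩ := hc.exists_generator
    have h1 : orderOf (c : G) = Nat.card T := by
      rw [show ((c : G)) = T.subtype c from rfl,
        orderOf_injective T.subtype Subtype.coe_injective c, ← Nat.card_zpowers,
        (Subgroup.eq_top_iff' _).mpr hgen, Subgroup.card_top]
    rw [← h1]
    exact orderOf_dvd_of_pow_eq_one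
      (pow_lcm_eq_one_of_mem_closure_pair a b c.2)
  · exact (Subgroup.orderOf_dvd_natCard _ (Subgroup.subset_closure (by simp)))
  · exact (Subgroup.orderOf_dvd_natCard _ (Subgroup.subset_closure (by simp)))

lemma card_ker_unitsMap {d n : ℕ} (hd : d ∣ n) [NeZero n] :
    Nat.card (ZMod.unitsMap hd).ker * Nat.card (ZMod d)ˣ = Nat.card (ZMod n)ˣ := by
  have h1 := Subgroup.card_mul_index (ZMod.unitsMap hd).ker
  rwa [Subgroup.index_ker,
    MonoidHom.range_eq_top.mpr (ZMod.unitsMap_surjective hd), Subgroup.card_top] at h1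

/-- The canonical projection from `ℤ_pˣ` to `(ZMod (p^n))ˣ`. -/
noncomputable def padicUnitsProj (p : ℕ) [Fact p.Prime] (n : ℕ) : (PadicInt p)ˣ →* (ZMod (p ^ n))ˣ :=
  Units.map (PadicInt.toZModPow (p := p) n).toMonoidHom

@[simp] lemma padicUnitsProj_val (p : ℕ) [Fact p.Prime] (n : ℕ) (u : (PadicInt p)ˣ) :
    ((padicUnitsProj p n u : (ZMod (p ^ n))ˣ) : ZMod (p ^ n))
      = PadicInt.toZModPow n (u : PadicInt p) := rfl

lemma padic_units_map_surjective (p : ℕ) [hp : Fact p.Prime] {n : ℕ} (hn : n ≠ 0) :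
    Function.Surjective (padicUnitsProj p n) := by
  intro v
  haveI : NeZero (p ^ n) := ⟨pow_ne_zero n hp.out.ne_zero⟩
  set k : ℕ := ((v : ZMod (p ^ n)).val) with hk
  set x : PadicInt p := (k : PadicInt p) with hxdef
  have hx : PadicInt.toZModPow n x = (v : ZMod (p ^ n)) := by
    rw [hxdef, map_natCast, hk, ZMod.natCast_val, ZMod.cast_id]
  have hxu : IsUnit x := by
    rw [PadicInt.isUnit_iff]
    refine le_antisymm (PadicInt.norm_le_one x) ?_
    by_contra hlt
    push_neg at hlt
    have hdvd : (p : ℤ) ∣ (k : ℤ) := by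
      exact (PadicInt.norm_int_lt_one_iff_dvd (p := p) (k : ℤ)).mp (by
        simpa [hxdef] using hlt)
    have hdvd' : p ∣ k := Int.ofNat_dvd.mp hdvd
    have h0 : ((k : ZMod p)) = 0 := (ZMod.natCast_eq_zero_iff k p).mpr hdvd'
    have hunit : IsUnit ((k : ZMod p)) := by
      have : ((k : ZMod p)) = ZMod.castHom (dvd_pow_self p hn) (ZMod p) (v : ZMod (p ^ n)) := by
        rw [hk, ZMod.castHom_apply, ZMod.natCast_val]
      rw [this]
      exact (Units.isUnit v).map _
    rw [h0] at hunit
    exact (not_isUnit_zero (M₀ := ZMod p)) hunit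
  refine ⟨hxu.unit, Units.ext ?_⟩
  simp [hx]

lemma units_toZModPow_eq_one_iff {p : ℕ} [hp : Fact p.Prime] {n : ℕ} (u : (PadicInt p)ˣ) :
    padicUnitsProj p n u = 1 ↔
      ‖((u : PadicInt p) - 1)‖ ≤ (p : ℝ) ^ (-(n : ℤ)) := by
  rw [PadicInt.norm_le_pow_iff_mem_span_pow, ← PadicInt.ker_toZModPow, RingHom.mem_ker,
    map_sub, map_one, sub_eq_zero]
  constructor
  · intro h
    have := congrArg (Units.val) h
    simpa using this
  · intro h
    ext
    simpa using h

private lemma comm_cancel {G : Type*} [CommGroup G] (X a b : G) (i j : ℤ) :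
    X * a ^ (-i) * b ^ (-j) * a ^ i * b ^ j = X := by
  simp [zpow_neg, mul_assoc, mul_comm, mul_left_comm]

theorem main_aux
    (p : ℕ) (hp : Fact p.Prime)
    (q : ℕ) (r : ℕ)
    (Lq : ℕ) (hLq : 0 < Lq) (Lr : ℕ) (hLqr : Lq ≤ Lr)
    (hq_ord : ∀ l : ℕ, 1 ≤ l →
      (l ≤ Lq → orderOf ((q : ZMod (p ^ l))) = orderOf ((q : ZMod p))) ∧
      (Lq < l → orderOf ((q : ZMod (p ^ l))) = p ^ (l - Lq) * orderOf ((q : ZMod p))))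
    (hr_ord : ∀ l : ℕ, 1 ≤ l →
      (l ≤ Lr → orderOf ((r : ZMod (p ^ l))) = orderOf ((r : ZMod p))))
    (uq ur : (PadicInt p)ˣ)
    (huq : (uq : PadicInt p) = (q : PadicInt p))
    (hur : (ur : PadicInt p) = (r : PadicInt p)) :
    ((Subgroup.closure {uq, ur}).topologicalClosure).index ≠ 0 ∧
      Nat.lcm (orderOf ((q : ZMod p))) (orderOf ((r : ZMod p)))
          * ((Subgroup.closure {uq, ur}).topologicalClosure).index
        = (p - 1) * p ^ (Lq - 1) := by
  haveI := hp
  set l := Lq with hldef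
  have hl1 : 1 ≤ l := hLq
  haveI : NeZero (p ^ l) := ⟨pow_ne_zero l hp.out.ne_zero⟩
  set φ : ∀ n : ℕ, (PadicInt p)ˣ →* (ZMod (p ^ n))ˣ := padicUnitsProj p with hφ
  set oq := orderOf ((q : ZMod p)) with hoqdef
  set or' := orderOf ((r : ZMod p)) with hordef
  -- values of the units
  have hvq : ∀ n : ℕ, ((φ n uq : (ZMod (p ^ n))ˣ) : ZMod (p ^ n)) = (q : ZMod (p ^ n)) := by
    intro n; simp [hφ, huq]
  have hvr : ∀ n : ℕ, ((φ n ur : (ZMod (p ^ n))ˣ) : ZMod (p ^ n)) = (r : ZMod (p ^ n)) := by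
    intro n; simp [hφ, hur]
  have hoq : ∀ n : ℕ, orderOf (φ n uq) = orderOf ((q : ZMod (p ^ n))) := fun n => by
    rw [← orderOf_units, hvq]
  have hor : ∀ n : ℕ, orderOf (φ n ur) = orderOf ((r : ZMod (p ^ n))) := fun n => by
    rw [← orderOf_units, hvr]
  have hoql : orderOf (φ l uq) = oq := (hoq l).trans ((hq_ord l hl1).1 le_rfl)
  have horl : orderOf (φ l ur) = or' := (hor l).trans (hr_ord l hl1 hLqr)
  -- compatibility of levels
  have hcomp : ∀ (m n : ℕ) (h : m ≤ n) (u : (PadicInt p)ˣ),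
      ZMod.unitsMap (pow_dvd_pow p h) (φ n u) = φ m u := by
    intro m n h u
    ext
    simp only [hφ, ZMod.unitsMap_def, Units.coe_map, RingHom.toMonoidHom_eq_coe,
      MonoidHom.coe_coe]
    exact RingHom.congr_fun (PadicInt.zmod_cast_comp_toZModPow m n h) (u : PadicInt p)
  -- projection to level 1
  set π : (ZMod (p ^ l))ˣ →* (ZMod p)ˣ :=
    ZMod.unitsMap (dvd_pow_self p (Nat.one_le_iff_ne_zero.mp hl1)) with hπ
  have hvπq : ((π (φ l uq) : (ZMod p)ˣ) : ZMod p) = (q : ZMod p) := by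
    simp [hπ, ZMod.unitsMap_def, hvq l]
  have hvπr : ((π (φ l ur) : (ZMod p)ˣ) : ZMod p) = (r : ZMod p) := by
    simp [hπ, ZMod.unitsMap_def, hvr l]
  have hoπq : orderOf (π (φ l uq)) = oq := by rw [← orderOf_units, hvπq]
  have hoπr : orderOf (π (φ l ur)) = or' := by rw [← orderOf_units, hvπr]
  have hoq_pos : 0 < oq := by rw [← hoπq]; exact orderOf_pos _
  have hor_pos : 0 < or' := by rw [← hoπr]; exact orderOf_pos _
  have hoq_dvd : oq ∣ p - 1 := by
    rw [← hoπq]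
    have h1 := orderOf_dvd_natCard (π (φ l uq))
    rwa [Nat.card_eq_fintype_card, ZMod.card_units_eq_totient, Nat.totient_prime hp.out] at h1
  have hor_dvd : or' ∣ p - 1 := by
    rw [← hoπr]
    have h1 := orderOf_dvd_natCard (π (φ l ur))
    rwa [Nat.card_eq_fintype_card, ZMod.card_units_eq_totient, Nat.totient_prime hp.out] at h1
  set m := Nat.lcm oq or' with hmdef
  have hm_dvd : m ∣ p - 1 := Nat.lcm_dvd hoq_dvd hor_dvd
  have hpm : Nat.Coprime m p := by
    have h1 : Nat.Coprime p (p - 1) := by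
      obtain ⟨k, hk⟩ : ∃ k, p = k + 1 := ⟨p - 1, by have := hp.out.pos; omega⟩
      rw [hk]; simp
    exact (h1.coprime_dvd_right hm_dvd).symm
  -- the subgroups
  set C : Subgroup (PadicInt p)ˣ := Subgroup.closure {uq, ur} with hC
  set S : Subgroup (ZMod (p ^ l))ˣ := Subgroup.closure {φ l uq, φ l ur} with hS
  set K' : Subgroup (PadicInt p)ˣ := S.comap (φ l) with hK'
  have hqS : φ l uq ∈ S := Subgroup.subset_closure (Set.mem_insert _ _)
  have hrS : φ l ur ∈ S := Subgroup.subset_closure (Set.mem_insert_of_mem _ rfl)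
  have hCK' : C ≤ K' := by
    rw [hC, Subgroup.closure_le]
    rintro x (rfl | rfl)
    · exact hqS
    · exact hrS
  have hkerK' : (φ l).ker ≤ K' := by
    intro x hx
    rw [MonoidHom.mem_ker] at hx
    show φ l x ∈ S
    rw [hx]; exact one_mem S
  have hker_open : IsOpen ((φ l).ker : Set (PadicInt p)ˣ) := by
    have heq : ((φ l).ker : Set (PadicInt p)ˣ)
        = (Units.val) ⁻¹' (Metric.ball (1 : PadicInt p) ((p : ℝ) ^ (-(l : ℤ) + 1))) := by
      ext u
      simp only [SetLike.mem_coe, MonoidHom.mem_ker, Set.mem_preimage, Metric.mem_ball,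
        dist_eq_norm]
      rw [hφ]
      rw [units_toZModPow_eq_one_iff, PadicInt.norm_le_pow_iff_norm_lt_pow_add_one]
    rw [heq]
    exact (Units.isOpenEmbedding_val.continuous).isOpen_preimage _ Metric.isOpen_ball
  have hK'closed : IsClosed (K' : Set (PadicInt p)ˣ) :=
    Subgroup.isClosed_of_isOpen K' (Subgroup.isOpen_mono hkerK' hker_open)
  have hdir1 : C.topologicalClosure ≤ K' :=
    Subgroup.topologicalClosure_minimal C hCK' hK'closed
  -- the reverse inclusion
  have hdir2 : K' ≤ C.topologicalClosure := by
    intro x hx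
    have hx' : φ l x ∈ S := hx
    have hSsup : S = Subgroup.zpowers (φ l uq) ⊔ Subgroup.zpowers (φ l ur) := by
      rw [hS, Subgroup.zpowers_eq_closure, Subgroup.zpowers_eq_closure,
        ← Subgroup.closure_union, Set.singleton_union]
    rw [hSsup] at hx'
    obtain ⟨y, ⟨i, hy⟩, z, ⟨j, hz⟩, hyz⟩ := Subgroup.mem_sup.mp hx'
    show x ∈ (C.topologicalClosure : Set (PadicInt p)ˣ)
    rw [Subgroup.topologicalClosure_coe,
      Units.isOpenEmbedding_val.toIsEmbedding.closure_eq_preimage_closure_image,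
      Set.mem_preimage]
    rw [Metric.mem_closure_iff]
    intro ε hε
    have hp1R : (1 : ℝ) < (p : ℝ) := by exact_mod_cast hp.out.one_lt
    obtain ⟨k0, hk0⟩ := exists_pow_lt_of_lt_one hε
      (show (p : ℝ)⁻¹ < 1 by rw [inv_lt_one_iff₀]; right; exact hp1R)
    set n := max k0 l with hn
    have hln : l ≤ n := le_max_right _ _
    haveI : NeZero (p ^ n) := ⟨pow_ne_zero n hp.out.ne_zero⟩
    have hn_small : ((p : ℝ)) ^ (-(n : ℤ)) < ε := by
      have h1 : ((p : ℝ)) ^ (-(n : ℤ)) = ((p : ℝ)⁻¹) ^ n := by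
        rw [zpow_neg, inv_pow, zpow_natCast]
      rw [h1]
      calc ((p : ℝ)⁻¹) ^ n ≤ ((p : ℝ)⁻¹) ^ k0 := by
            apply pow_le_pow_of_le_one (by positivity) (by
              rw [inv_le_one_iff₀]; right; exact le_of_lt hp1R) (le_max_left _ _)
        _ < ε := hk0
    -- order of q at level n
    have horder_n : orderOf ((q : ZMod (p ^ n))) = p ^ (n - l) * oq := by
      rcases eq_or_lt_of_le hln with h | h
      · rw [← h, Nat.sub_self, pow_zero, one_mul]
        exact (hq_ord l hl1).1 le_rfl
      · exact (hq_ord n (hl1.trans hln)).2 h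
    set ψ : (ZMod (p ^ n))ˣ →* (ZMod (p ^ l))ˣ := ZMod.unitsMap (pow_dvd_pow p hln) with hψ
    have hψq : ψ (φ n uq) = φ l uq := hcomp l n hln uq
    have hψr : ψ (φ n ur) = φ l ur := hcomp l n hln ur
    have hψx : ψ (φ n x) = φ l x := hcomp l n hln x
    have hgord : orderOf ((φ n uq) ^ oq) = p ^ (n - l) := by
      rw [orderOf_pow, hoq n, horder_n,
        Nat.gcd_eq_right (dvd_mul_left oq (p ^ (n - l))), Nat.mul_div_cancel _ hoq_pos]
    have hkerψ : ψ.ker ≤ Subgroup.zpowers ((φ n uq) ^ oq) := by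
      have hgmem : (φ n uq) ^ oq ∈ ψ.ker := by
        rw [MonoidHom.mem_ker, map_pow, hψq, ← hoql, pow_orderOf_eq_one]
      have hle : Subgroup.zpowers ((φ n uq) ^ oq) ≤ ψ.ker := Subgroup.zpowers_le.mpr hgmem
      have hcardker : Nat.card ψ.ker = p ^ (n - l) := by
        have h2 := card_ker_unitsMap (pow_dvd_pow p hln)
        rw [Nat.card_eq_fintype_card (α := (ZMod (p ^ l))ˣ),
          Nat.card_eq_fintype_card (α := (ZMod (p ^ n))ˣ), ZMod.card_units_eq_totient,
          ZMod.card_units_eq_totient, Nat.totient_prime_pow hp.out hl1,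
          Nat.totient_prime_pow hp.out (hl1.trans hln)] at h2
        have h3 : Nat.card ψ.ker * p ^ (l - 1) * (p - 1) = p ^ (n - 1) * (p - 1) := by
          rw [mul_assoc]; exact h2
        have h4 : Nat.card ψ.ker * p ^ (l - 1) = p ^ (n - 1) := by
          have hp2 := hp.out.two_le
          exact Nat.eq_of_mul_eq_mul_right (by omega) h3
        have h5 : p ^ (n - 1) = p ^ (n - l) * p ^ (l - 1) := by
          rw [← pow_add]
          congr 1
          omega
        rw [h5] at h4
        exact Nat.eq_of_mul_eq_mul_right (pow_pos hp.out.pos _) h4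
      have heq : Subgroup.zpowers ((φ n uq) ^ oq) = ψ.ker :=
        Subgroup.eq_of_le_of_card_ge hle (by rw [hcardker, Nat.card_zpowers, hgord])
      rw [← heq]
    have hw : φ n x * (φ n uq) ^ (-i) * (φ n ur) ^ (-j) ∈ ψ.ker := by
      rw [MonoidHom.mem_ker, map_mul, map_mul, map_zpow, map_zpow, hψq, hψr, hψx,
        ← hyz, ← hy, ← hz]
      have := comm_cancel (1 : (ZMod (p ^ l))ˣ) (φ l uq) (φ l ur) (-i) (-j)
      simpa [neg_neg, mul_comm, mul_left_comm, mul_assoc] using this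
    obtain ⟨k, hk⟩ := hkerψ hw
    set c : (PadicInt p)ˣ := uq ^ ((oq : ℤ) * k + i) * ur ^ j with hc
    have huqC : uq ∈ C := Subgroup.subset_closure (Set.mem_insert _ _)
    have hurC : ur ∈ C := Subgroup.subset_closure (Set.mem_insert_of_mem _ rfl)
    have hcC : c ∈ C := by
      rw [hc]
      exact mul_mem (zpow_mem huqC _) (zpow_mem hurC _)
    have hφnc : φ n c = φ n x := by
      have hk' : (φ n uq) ^ ((oq : ℤ) * k)
          = φ n x * (φ n uq) ^ (-i) * (φ n ur) ^ (-j) := by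
        rw [← hk, zpow_mul, zpow_natCast]
      rw [hc, map_mul, map_zpow, map_zpow, zpow_add, hk']
      exact comm_cancel (φ n x) (φ n uq) (φ n ur) i j
    refine ⟨(c : PadicInt p), ⟨c, hcC, rfl⟩, ?_⟩
    rw [dist_eq_norm]
    have hnorm : ‖(x : PadicInt p) - (c : PadicInt p)‖ ≤ (p : ℝ) ^ (-(n : ℤ)) := by
      rw [PadicInt.norm_le_pow_iff_mem_span_pow, ← PadicInt.ker_toZModPow, RingHom.mem_ker,
        map_sub, sub_eq_zero]
      exact (congrArg Units.val hφnc).symm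
    exact lt_of_le_of_lt hnorm hn_small
  have hKK' : C.topologicalClosure = K' := le_antisymm hdir1 hdir2
  -- kernel of π has cardinality p^(l-1)
  have hcard_kerπ : Nat.card π.ker = p ^ (l - 1) := by
    have h2 := card_ker_unitsMap (dvd_pow_self p (Nat.one_le_iff_ne_zero.mp hl1))
    rw [Nat.card_eq_fintype_card (α := (ZMod p)ˣ),
      Nat.card_eq_fintype_card (α := (ZMod (p ^ l))ˣ), ZMod.card_units_eq_totient,
      ZMod.card_units_eq_totient, Nat.totient_prime hp.out,
      Nat.totient_prime_pow hp.out hl1] at h2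
    have hp2 := hp.out.two_le
    exact Nat.eq_of_mul_eq_mul_right (by omega) h2
  -- elements of S killed by π are trivial
  have hker_triv : ∀ s ∈ S, π s = 1 → s = 1 := by
    intro s hsS hs1
    have h1 : orderOf s ∣ m := by
      apply orderOf_dvd_of_pow_eq_one
      have := pow_lcm_eq_one_of_mem_closure_pair (φ l uq) (φ l ur) hsS
      rwa [hoql, horl] at this
    have h2 : orderOf s ∣ p ^ (l - 1) := by
      have h3 := Subgroup.orderOf_dvd_natCard π.ker (by rwa [MonoidHom.mem_ker])
      rwa [hcard_kerπ] at h3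
    have h4 := Nat.dvd_gcd h1 h2
    rw [Nat.Coprime.gcd_eq_one (hpm.pow_right (l - 1))] at h4
    exact orderOf_eq_one_iff.mp (Nat.dvd_one.mp h4)
  have hinj : Set.InjOn π (S : Set (ZMod (p ^ l))ˣ) := by
    intro s hs t ht hst
    have h1 : s * t⁻¹ ∈ S := mul_mem hs (inv_mem ht)
    have h2 : π (s * t⁻¹) = 1 := by rw [map_mul, map_inv, hst, mul_inv_cancel]
    exact mul_inv_eq_one.mp (hker_triv _ h1 h2)
  -- cardinality of S
  have hSmap : S.map π = Subgroup.closure {π (φ l uq), π (φ l ur)} := by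
    rw [hS, MonoidHom.map_closure, Set.image_pair]
  have hcard_map : Nat.card (S.map π) = m := by
    rw [hSmap]
    rw [card_closure_pair (π (φ l uq)) (π (φ l ur)), hoπq, hoπr]
  have hcardS : Nat.card S = m := by
    rw [← hcard_map]
    have e1 : Nat.card S = ((S : Set (ZMod (p ^ l))ˣ)).ncard := by
      rw [← Nat.card_coe_set_eq]; rfl
    have e2 : Nat.card (S.map π) = ((π '' (S : Set (ZMod (p ^ l))ˣ))).ncard := by
      rw [← Nat.card_coe_set_eq]
      exact Nat.card_congr (Equiv.setCongr (Subgroup.coe_map π S))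
    rw [e1, e2, Set.ncard_image_of_injOn hinj]
  -- final index computation
  have hkey : m * ((Subgroup.closure {uq, ur}).topologicalClosure).index
      = (p - 1) * p ^ (l - 1) := by
    rw [show Subgroup.closure {uq, ur} = C from rfl, hKK', hK',
      Subgroup.index_comap_of_surjective _
        (padic_units_map_surjective p (Nat.one_le_iff_ne_zero.mp hl1)),
      ← hcardS]
    rw [Subgroup.card_mul_index S, Nat.card_eq_fintype_card (α := (ZMod (p ^ l))ˣ),
      ZMod.card_units_eq_totient, Nat.totient_prime_pow hp.out hl1, mul_comm]
  constructor
  · intro h0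
    rw [h0, mul_zero] at hkey
    have hp2 := hp.out.two_le
    have hpos : 0 < (p - 1) * p ^ (l - 1) :=
      Nat.mul_pos (by omega) (pow_pos hp.out.pos _)
    omega
  · exact hkey

/-- Remark after Theorem 3.6: for an odd prime `p` and primes `q, r ≠ p`, with `L_q, L_r` as in
the order formula (A.1), the closure `H` of the subgroup of `ℤ_pˣ` generated by `q` and `r`
has finite index and `lcm(o_p(q), o_p(r)) · [ℤ_pˣ : H] = (p-1) · p^(min(L_q,L_r) - 1)`. -/
theorem index_closure_two_primes
    (p : ℕ) (hp : Fact p.Prime) (hp2 : p ≠ 2)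
    (q : ℕ) (hq : q.Prime) (hqp : q ≠ p)
    (r : ℕ) (hr : r.Prime) (hrp : r ≠ p)
    (Lq : ℕ) (hLq : 0 < Lq)
    (hq_ord : ∀ l : ℕ, 1 ≤ l →
      (l ≤ Lq → orderOf ((q : ZMod (p ^ l))) = orderOf ((q : ZMod p))) ∧
      (Lq < l → orderOf ((q : ZMod (p ^ l))) = p ^ (l - Lq) * orderOf ((q : ZMod p))))
    (Lr : ℕ) (hLr : 0 < Lr)
    (hr_ord : ∀ l : ℕ, 1 ≤ l →
      (l ≤ Lr → orderOf ((r : ZMod (p ^ l))) = orderOf ((r : ZMod p))) ∧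
      (Lr < l → orderOf ((r : ZMod (p ^ l))) = p ^ (l - Lr) * orderOf ((r : ZMod p))))
    (uq ur : (PadicInt p)ˣ)
    (huq : (uq : PadicInt p) = (q : PadicInt p))
    (hur : (ur : PadicInt p) = (r : PadicInt p)) :
    ((Subgroup.closure {uq, ur}).topologicalClosure).index ≠ 0 ∧
      Nat.lcm (orderOf ((q : ZMod p))) (orderOf ((r : ZMod p)))
          * ((Subgroup.closure {uq, ur}).topologicalClosure).index
        = (p - 1) * p ^ (min Lq Lr - 1) := by
  rcases le_total Lq Lr with h | h
  · have hmain := main_aux p hp q r Lq hLq Lr h hq_ord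
      (fun l hl => (hr_ord l hl).1) uq ur huq hur
    rwa [min_eq_left h]
  · have hmain := main_aux p hp r q Lr hLr Lq h hr_ord
      (fun l hl => (hq_ord l hl).1) ur uq hur huq
    rw [min_eq_right h]
    rwa [Set.pair_comm ur uq, Nat.lcm_comm] at hmain
end

section
/- Let F be a finite nonempty set of primes. Then the subgroup of the topological group (∏_{p∈F} ℤ_p)ˣ generated by the set of units arising from primes q ∉ F (each such prime q being a unit in every ℤ_p with p ∈ F) is dense in (∏_{p∈F} ℤ_p)ˣ. -/
/-!
Approximating a unit `u` of `∏_{p ∈ F} ℤ_p` modulo `p ^ n` in every coordinate amounts, by the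
Chinese remainder theorem, to prescribing a unit residue modulo `∏_{p ∈ F} p ^ n`; Dirichlet's
theorem provides infinitely many primes in that residue class, hence one outside `F`. The
resulting primes converge to `u` in `∏_{p ∈ F} ℤ_p`, and since this is a complete normed ring,
its unit group carries the subspace topology, so they converge to `u` as units as well.
-/

open Filter Topology
open scoped Function

theorem Nat.infinite_setOf_prime_and_forall_eq_mod {ι : Type*} [Fintype ι] {a : ι → ℕ}
    [∀ i, NeZero (a i)] (ha : Pairwise (Nat.Coprime on a)) {b : ∀ i, ZMod (a i)}
    (hb : IsUnit b) : {q : ℕ | q.Prime ∧ ∀ i, (q : ZMod (a i)) = b i}.Infinite := by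
  have : NeZero (∏ i, a i) := ⟨Finset.prod_ne_zero_iff.2 fun i _ ↦ NeZero.ne (a i)⟩
  let e := ZMod.prodEquivPi a ha
  refine (Nat.infinite_setOfPred_prime_and_eq_mod (hb.map e.symm)).mono ?_
  rintro q ⟨hq, hqb⟩
  have hqb' : (q : ∀ i, ZMod (a i)) = b := by simpa [e] using congrArg e hqb
  exact ⟨hq, congrFun hqb'⟩

namespace PadicInt

variable {p : ℕ} [Fact p.Prime]

theorem tendsto_of_toZModPow_eq {x : ℕ → ℤ_[p]} {y : ℤ_[p]}
    (h : ∀ n, toZModPow n (x n) = toZModPow n y) : Tendsto x atTop (𝓝 y) := by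
  refine Metric.tendsto_atTop.2 fun ε hε ↦ ?_
  obtain ⟨N, hN⟩ := exists_pow_neg_lt p hε
  refine ⟨N, fun n hn ↦ lt_of_le_of_lt ?_ hN⟩
  have hdist : dist (x n) y ≤ (p : ℝ) ^ (-(n : ℤ)) := by
    rw [dist_eq_norm, norm_le_pow_iff_mem_span_pow, ← ker_toZModPow, RingHom.mem_ker, map_sub,
      h n, sub_self]
  refine hdist.trans (zpow_le_zpow_right₀ ?_ (by omega))
  exact_mod_cast (Fact.out : p.Prime).one_le

end PadicInt

section ProductOfPadicIntegers

open PadicInt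

variable {F : Finset ℕ} [hF : ∀ p : F, Fact (p : ℕ).Prime]

theorem isUnit_natCast_pi_padicInt_of_prime_notMem {q : ℕ} (hq : q.Prime) (hqF : q ∉ F) :
    IsUnit (q : ∀ p : F, ℤ_[p]) := by
  refine Pi.isUnit_iff.2 fun p ↦ PadicInt.isUnit_iff.2 ?_
  refine norm_natCast_eq_one_iff.2 ((Nat.coprime_primes (hF p).out hq).2 ?_)
  rintro rfl
  exact hqF p.2

theorem exists_prime_notMem_forall_toZModPow_eq (u : (∀ p : F, ℤ_[p])ˣ) (n : ℕ) :
    ∃ q : ℕ, q.Prime ∧ q ∉ F ∧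
      ∀ p : F, toZModPow n (q : ℤ_[p]) = toZModPow n ((u : ∀ p : F, ℤ_[p]) p) := by
  have hcop : Pairwise (Nat.Coprime on fun p : F ↦ (p : ℕ) ^ n) := fun p p' hpp' ↦
    Nat.Coprime.pow n n <|
      (Nat.coprime_primes (hF p).out (hF p').out).2 (Subtype.coe_injective.ne hpp')
  have : ∀ p : F, NeZero ((p : ℕ) ^ n) := fun p ↦ ⟨pow_ne_zero n (hF p).out.ne_zero⟩
  have hunit : IsUnit fun p : F ↦ toZModPow n ((u : ∀ p : F, ℤ_[p]) p) :=
    Pi.isUnit_iff.2 fun p ↦ (u.isUnit.map (Pi.evalRingHom _ p)).map (toZModPow n)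
  obtain ⟨q, ⟨hq, hqu⟩, hqF⟩ :=
    (Nat.infinite_setOf_prime_and_forall_eq_mod hcop hunit).exists_notMem_finset F
  exact ⟨q, hq, hqF, fun p ↦ (map_natCast _ q).trans (hqu p)⟩

end ProductOfPadicIntegers

theorem dense_closure_units_of_primes_not_mem_general
    (F : Finset ℕ) (hF : ∀ p : F, Fact (Nat.Prime (p : ℕ))) :
    Dense ((Subgroup.closure
        {u : (∀ p : F, PadicInt (p : ℕ))ˣ |
          ∃ q : ℕ, q.Prime ∧ q ∉ F ∧
            (u : ∀ p : F, PadicInt (p : ℕ)) = fun (p : F) => (q : PadicInt (p : ℕ))}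
        : Subgroup (∀ p : F, PadicInt (p : ℕ))ˣ) : Set (∀ p : F, PadicInt (p : ℕ))ˣ) := by
  refine Dense.mono Subgroup.subset_closure ?_
  rw [Units.isOpenEmbedding_val.isInducing.dense_iff]
  intro u
  choose q hq hqF hqu using exists_prime_notMem_forall_toZModPow_eq u
  have hlim : Tendsto (fun n ↦ (q n : ∀ p : F, ℤ_[p])) atTop (𝓝 u) :=
    tendsto_pi_nhds.2 fun p ↦ PadicInt.tendsto_of_toZModPow_eq fun n ↦ hqu n p
  refine mem_closure_of_tendsto hlim (.of_forall fun n ↦ ?_)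
  exact ⟨(isUnit_natCast_pi_padicInt_of_prime_notMem (hq n) (hqF n)).unit,
    ⟨q n, hq n, hqF n, rfl⟩, rfl⟩

/-- For a finite nonempty set `F` of primes, the subgroup of `(∏_{p ∈ F} ℤ_p)ˣ` generated by
the units coming from primes `q ∉ F` is dense. -/
theorem dense_closure_units_of_primes_not_mem
    (F : Finset ℕ) (hF : ∀ p : F, Fact (Nat.Prime (p : ℕ))) (hne : F.Nonempty) :
    Dense ((Subgroup.closure
        {u : (∀ p : F, PadicInt (p : ℕ))ˣ |
          ∃ q : ℕ, q.Prime ∧ q ∉ F ∧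
            (u : ∀ p : F, PadicInt (p : ℕ)) = fun (p : F) => (q : PadicInt (p : ℕ))}
        : Subgroup (∀ p : F, PadicInt (p : ℕ))ˣ) : Set (∀ p : F, PadicInt (p : ℕ))ˣ) :=
  dense_closure_units_of_primes_not_mem_general F hF
end

section
/- Let F be a finite nonempty set of primes, let n ≥ 1, and set N = ∏_{p∈F} p^n. Then there exist at most |F| + 1 prime numbers q_1, ..., q_m, none belonging to F, whose residues modulo N generate the unit group (ℤ/Nℤ)ˣ. -/
/-!
By the Chinese remainder theorem `(ℤ/Nℤ)ˣ ≅ ∏_{p ∈ F} (ℤ/p^nℤ)ˣ`, and a product of groups needs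
at most as many generators as its factors together. For odd `p` the factor is cyclic, while
`(ℤ/2^nℤ)ˣ` is generated by `-1` and `5`: the powers of `5` form a subgroup of index two that
misses `-1`, as seen modulo `4`. So `(ℤ/Nℤ)ˣ` has at most `|F| + 1` generators, and Dirichlet's
theorem lifts each of them to a prime larger than every element of `F`.
-/

open Function Group

namespace Group

variable {G H : Type*} [Group G] [Group H]

lemma rank_prod_le [FG G] [FG H] : rank (G × H) ≤ rank G + rank H := by
  classical
  obtain ⟨S, hS_card, hS⟩ := rank_spec G
  obtain ⟨T, hT_card, hT⟩ := rank_spec H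
  calc rank (G × H)
      ≤ (S.image (MonoidHom.inl G H) ∪ T.image (MonoidHom.inr G H)).card := by
        apply rank_le
        rw [Finset.coe_union, Finset.coe_image, Finset.coe_image, Subgroup.closure_union,
          ← MonoidHom.map_closure, ← MonoidHom.map_closure, hS, hT, eq_top_iff,
          ← Subgroup.top_prod_top, Subgroup.prod_le_iff]
        exact ⟨le_sup_left, le_sup_right⟩
    _ ≤ S.card + T.card :=
        (Finset.card_union_le _ _).trans (add_le_add Finset.card_image_le Finset.card_image_le)
    _ = rank G + rank H := by rw [hS_card, hT_card]

lemma rank_le_one_of_isCyclic [FG G] [IsCyclic G] : rank G ≤ 1 := by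
  obtain ⟨g, hg⟩ := IsCyclic.exists_generator (α := G)
  calc rank G ≤ ({g} : Finset G).card := by
        apply rank_le
        rw [Finset.coe_singleton, ← Subgroup.zpowers_eq_closure, Subgroup.eq_top_iff']
        exact hg
    _ = 1 := Finset.card_singleton g

end Group

lemma Subgroup.eq_top_of_index_eq_two_of_le {G : Type*} [Group G] {H K : Subgroup G}
    (hH : H.index = 2) (hHK : H ≤ K) (hKH : ¬K ≤ H) : K = ⊤ := by
  have h_mul := relIndex_mul_index hHK
  rw [hH] at h_mul
  have h_rel : H.relIndex K ≠ 1 := fun h => hKH (relIndex_eq_one.mp h)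
  rcases (Nat.dvd_prime Nat.prime_two).mp (Dvd.intro _ h_mul) with h | h
  · exact absurd h h_rel
  · rw [h] at h_mul
    exact index_eq_one.mp (by omega)

namespace ZMod

lemma rank_units_mul_le {m k : ℕ} (h : m.Coprime k) :
    rank (ZMod (m * k))ˣ ≤ rank (ZMod m)ˣ + rank (ZMod k)ˣ := by
  rw [rank_congr ((Units.mapEquiv (chineseRemainder h).toMulEquiv).trans MulEquiv.prodUnits)]
  exact rank_prod_le

lemma rank_units_prod_le {ι : Type*} (s : Finset ι) (f : ι → ℕ)
    (hf : (s : Set ι).Pairwise (Nat.Coprime on f)) :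
    rank (ZMod (∏ i ∈ s, f i))ˣ ≤ ∑ i ∈ s, rank (ZMod (f i))ˣ := by
  classical
  induction s using Finset.induction_on with
  | empty =>
    rw [Finset.prod_empty, Finset.sum_empty, nonpos_iff_eq_zero, Group.rank_eq_zero_iff]
    infer_instance
  | @insert a s ha ih =>
    rw [Finset.coe_insert, Set.pairwise_insert] at hf
    rw [Finset.prod_insert ha, Finset.sum_insert ha]
    have h_cop : (f a).Coprime (∏ i ∈ s, f i) :=
      Nat.Coprime.prod_right fun i hi => (hf.2 i hi fun h => ha (h ▸ hi)).1
    exact (rank_units_mul_le h_cop).trans (add_le_add le_rfl (ih hf.1))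

lemma rank_units_prime_pow_le_one {p : ℕ} (hp : p.Prime) (hp2 : p ≠ 2) (n : ℕ) :
    rank (ZMod (p ^ n))ˣ ≤ 1 :=
  have := isCyclic_units_of_prime_pow p hp hp2 n
  rank_le_one_of_isCyclic

lemma neg_one_notMem_zpowers_five (k : ℕ) (h5 : Nat.Coprime 5 (2 ^ (k + 2))) :
    -1 ∉ Subgroup.zpowers (unitOfCoprime 5 h5) := by
  have h4 : 4 ∣ 2 ^ (k + 2) := Dvd.intro_left _ (pow_add 2 k 2).symm
  have h_five : unitOfCoprime 5 h5 ∈ (unitsMap h4).ker := by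
    rw [MonoidHom.mem_ker, Units.ext_iff, unitsMap_val, coe_unitOfCoprime, cast_natCast h4]
    decide
  have h_neg : -1 ∉ (unitsMap h4).ker := by
    rw [MonoidHom.mem_ker, Units.ext_iff, unitsMap_val, Units.val_neg, Units.val_one,
      cast_neg h4, cast_one h4]
    decide
  exact fun h => h_neg (Subgroup.zpowers_le.mpr h_five h)

lemma rank_units_two_pow_le_two (n : ℕ) : rank (ZMod (2 ^ n))ˣ ≤ 2 := by
  rcases le_or_gt n 2 with hn | hn
  · have := (isCyclic_units_two_pow_iff n).mpr hn
    exact rank_le_one_of_isCyclic.trans one_le_two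
  obtain ⟨k, rfl⟩ : ∃ k, n = k + 1 + 2 := ⟨n - 3, by omega⟩
  have h5 : Nat.Coprime 5 (2 ^ (k + 1 + 2)) := Nat.Coprime.pow_right _ (by norm_num)
  set five := unitOfCoprime 5 h5
  have h_card : Nat.card (Subgroup.zpowers five) * 2 = Nat.card (ZMod (2 ^ (k + 1 + 2)))ˣ := by
    rw [Nat.card_zpowers, ← orderOf_units, coe_unitOfCoprime, Nat.cast_ofNat, orderOf_five,
      Nat.card_eq_fintype_card, card_units_eq_totient, Nat.totient_prime_pow_succ Nat.prime_two]
    ring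
  have h_index : (Subgroup.zpowers five).index = 2 := by
    rw [← (Subgroup.zpowers five).card_mul_index] at h_card
    exact (Nat.eq_of_mul_eq_mul_left Nat.card_pos h_card).symm
  have h_top : Subgroup.closure {-1, five} = ⊤ :=
    Subgroup.eq_top_of_index_eq_two_of_le h_index
      (Subgroup.zpowers_le.mpr (Subgroup.subset_closure (by simp)))
      fun h => neg_one_notMem_zpowers_five _ h5 (h (Subgroup.subset_closure (by simp)))
  classical
  calc rank (ZMod (2 ^ (k + 1 + 2)))ˣ ≤ ({-1, five} : Finset _).card :=
        rank_le (by rwa [Finset.coe_insert, Finset.coe_singleton])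
    _ ≤ 2 := Finset.card_le_two

lemma rank_units_prime_pow_le {p : ℕ} (hp : p.Prime) (n : ℕ) :
    rank (ZMod (p ^ n))ˣ ≤ 1 + if p = 2 then 1 else 0 := by
  split_ifs with hp2
  · exact hp2 ▸ rank_units_two_pow_le_two n
  · exact rank_units_prime_pow_le_one hp hp2 n

lemma rank_units_prod_prime_pow_le {F : Finset ℕ} (hF : ∀ p ∈ F, p.Prime) (n : ℕ) :
    rank (ZMod (∏ p ∈ F, p ^ n))ˣ ≤ F.card + 1 := by
  have h_cop : (F : Set ℕ).Pairwise (Nat.Coprime on (· ^ n)) :=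
    fun p hp q hq hpq => Nat.coprime_pow_primes n n (hF p hp) (hF q hq) hpq
  calc rank (ZMod (∏ p ∈ F, p ^ n))ˣ ≤ ∑ p ∈ F, rank (ZMod (p ^ n))ˣ :=
        rank_units_prod_le F _ h_cop
    _ ≤ ∑ p ∈ F, (1 + if p = 2 then 1 else 0) :=
        Finset.sum_le_sum fun p hp => rank_units_prime_pow_le (hF p hp) n
    _ = F.card + if 2 ∈ F then 1 else 0 := by
        rw [Finset.sum_add_distrib, Finset.sum_ite_eq', Finset.card_eq_sum_ones]
    _ ≤ F.card + 1 := by split_ifs <;> omega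

lemma exists_primes_gt_generating_units (N B : ℕ) [NeZero N] :
    ∃ m ≤ rank (ZMod N)ˣ, ∃ q : Fin m → ℕ, (∀ i, (q i).Prime ∧ B < q i) ∧
      Subgroup.closure {u : (ZMod N)ˣ | ∃ i : Fin m, (u : ZMod N) = q i} = ⊤ := by
  obtain ⟨S, hS_card, hS⟩ := rank_spec (ZMod N)ˣ
  have h_lift (s : S) : ∃ q : ℕ, B < q ∧ q.Prime ∧ (q : ZMod N) = (s : (ZMod N)ˣ) :=
    Nat.forall_exists_prime_gt_and_eq_mod (Units.isUnit _) B
  choose f hf_gt hf_prime hf_eq using h_lift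
  refine ⟨S.card, hS_card.le, fun i => f (S.equivFin.symm i),
    fun i => ⟨hf_prime _, hf_gt _⟩, eq_top_iff.mpr (hS ▸ Subgroup.closure_mono ?_)⟩
  intro u hu
  exact ⟨S.equivFin ⟨u, hu⟩, by simp only [Equiv.symm_apply_apply, hf_eq]⟩

end ZMod

theorem exists_primes_generating_units_general
    (F : Finset ℕ) (hF : ∀ p ∈ F, p.Prime)
    (n : ℕ) (N : ℕ) (hN : N = ∏ p ∈ F, p ^ n) :
    ∃ m : ℕ, m ≤ F.card + 1 ∧ ∃ q : Fin m → ℕ,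
      (∀ i, (q i).Prime ∧ q i ∉ F) ∧
      Subgroup.closure
        {u : (ZMod N)ˣ | ∃ i : Fin m, (u : ZMod N) = ((q i : ℕ) : ZMod N)} = ⊤ := by
  have : NeZero N := ⟨hN ▸ Finset.prod_ne_zero_iff.mpr fun p hp => pow_ne_zero n (hF p hp).ne_zero⟩
  obtain ⟨m, hm, q, hq, h_gen⟩ := ZMod.exists_primes_gt_generating_units N (F.sup id)
  refine ⟨m, hm.trans (hN ▸ ZMod.rank_units_prod_prime_pow_le hF n), q,
    fun i => ⟨(hq i).1, fun h => ?_⟩, h_gen⟩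
  exact (hq i).2.not_ge (Finset.le_sup (f := id) h)

/-- For a finite nonempty set `F` of primes, `n ≥ 1` and `N = ∏_{p ∈ F} p^n`, there are at
most `|F| + 1` primes `q₁, …, q_m`, none in `F`, whose residues modulo `N` generate the unit
group `(ℤ/Nℤ)ˣ`. -/
theorem exists_primes_generating_units
    (F : Finset ℕ) (hF : ∀ p ∈ F, p.Prime) (hne : F.Nonempty)
    (n : ℕ) (hn : 1 ≤ n) (N : ℕ) (hN : N = ∏ p ∈ F, p ^ n) :
    ∃ m : ℕ, m ≤ F.card + 1 ∧ ∃ q : Fin m → ℕ,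
      (∀ i, (q i).Prime ∧ q i ∉ F) ∧
      Subgroup.closure
        {u : (ZMod N)ˣ | ∃ i : Fin m, (u : ZMod N) = ((q i : ℕ) : ZMod N)} = ⊤ :=
  exists_primes_generating_units_general F hF n N hN
end
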